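/- Let S consist of 2n points given as n pairs {p_i, q_i} in a metric space, let T be a minimum spanning tree of S, let h be a maximum-weight edge of T, and let H_1, H_2 be the vertex sets of the two components of T after removing h. If some pair has both of its points in H_1 or both in H_2, then every feasible coloring S = R ∪ B satisfies max(btCost(R), btCost(B)) ≥ w(h), where w(h) is the length of the edge h. -/

import Mathlib

/-!
Removing the edge `h` from the minimum spanning tree splits `S` into `H₁` and `H₂`, and
by the exchange argument every segment from `H₁` to `H₂` is at least as long as `h`. If a pair
lies inside one side, its two points receive different colours, so whichever colour a point on
the other side receives, that colour class meets both sides. Each spanning tree of this class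
then has an edge crossing the cut, of length at least `dist h.1 h.2`.
-/

variable {α : Type*} [MetricSpace α] [DecidableEq α]

/-- Two points are connected via the edge set `E` (edges usable in both directions). -/
def EdgeConn (E : Finset (α × α)) (x y : α) : Prop :=
  Relation.ReflTransGen (fun a b => (a, b) ∈ E ∨ (b, a) ∈ E) x y

/-- `E` is (the edge set of) a spanning tree of the complete graph on the finite
point set `X`. -/
def IsSpanningTreeOn (X : Finset α) (E : Finset (α × α)) : Prop :=
  (∀ e ∈ E, e.1 ∈ X ∧ e.2 ∈ X) ∧ E.card + 1 = X.card ∧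
    ∀ x ∈ X, ∀ y ∈ X, EdgeConn E x y

/-- The bottleneck spanning tree cost of `X`: the least `c ≥ 0` such that some
spanning tree on `X` has all edge lengths at most `c`. -/
noncomputable def btCost (X : Finset α) : ℝ :=
  sInf {c | 0 ≤ c ∧ ∃ E : Finset (α × α), IsSpanningTreeOn X E ∧ ∀ e ∈ E, dist e.1 e.2 ≤ c}

open Finset

section EdgeConn

omit [MetricSpace α] [DecidableEq α]

variable {E F : Finset (α × α)} {x y : α}

theorem EdgeConn.symm (hxy : EdgeConn E x y) : EdgeConn E y x := by
  induction hxy with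
  | refl => exact .refl
  | tail _ hbc ih => exact ih.head hbc.symm

theorem EdgeConn.trans {z : α} (hxy : EdgeConn E x y) (hyz : EdgeConn E y z) :
    EdgeConn E x z :=
  Relation.ReflTransGen.trans hxy hyz

theorem EdgeConn.mono (hEF : E ⊆ F) (hxy : EdgeConn E x y) : EdgeConn F x y :=
  Relation.ReflTransGen.mono (fun _ _ hab => hab.imp (@hEF _) (@hEF _)) _ _ hxy

theorem edgeConn_of_mem (hxy : (x, y) ∈ E) : EdgeConn E x y :=
  Relation.ReflTransGen.single (Or.inl hxy)

theorem EdgeConn.exists_edge_mem_not_mem (P : Set α) (hxy : EdgeConn E x y)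
    (hx : x ∈ P) (hy : y ∉ P) :
    ∃ u v, ((u, v) ∈ E ∨ (v, u) ∈ E) ∧ u ∈ P ∧ v ∉ P := by
  induction hxy with
  | refl => exact absurd hx hy
  | @tail b c _ hbc ih =>
    by_cases hb : b ∈ P
    · exact ⟨b, c, hbc, hb, hy⟩
    · exact ih hb

end EdgeConn

section SpanningTree

omit [MetricSpace α]

variable {S : Finset α} {T : Finset (α × α)}

theorem isSpanningTreeOn_star {x : α} (hx : x ∈ S) :
    IsSpanningTreeOn S ((S.erase x).image (Prod.mk x)) := by
  have hspoke : ∀ y ∈ S, EdgeConn ((S.erase x).image (Prod.mk x)) x y := fun y hy => by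
    by_cases hyx : y = x
    · exact hyx ▸ Relation.ReflTransGen.refl
    · exact edgeConn_of_mem (mem_image_of_mem _ (mem_erase.2 ⟨hyx, hy⟩))
  refine ⟨?_, ?_, fun y hy z hz => (hspoke y hy).symm.trans (hspoke z hz)⟩
  · rintro _ he
    obtain ⟨y, hy, rfl⟩ := mem_image.1 he
    exact ⟨hx, mem_of_mem_erase hy⟩
  · rw [card_image_of_injective _ (Prod.mk_right_injective x), card_erase_add_one hx]

theorem IsSpanningTreeOn.insert_erase {h : α × α} {a b : α} (hT : IsSpanningTreeOn S T)
    (hh : h ∈ T) (ha : a ∈ S) (hb : b ∈ S) (hab : ¬EdgeConn (T.erase h) a b)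
    (hreach : ∀ x ∈ S, EdgeConn (T.erase h) x a ∨ EdgeConn (T.erase h) x b) :
    IsSpanningTreeOn S (insert (a, b) (T.erase h)) := by
  obtain ⟨hTS, hcard, -⟩ := hT
  have hsub : T.erase h ⊆ insert (a, b) (T.erase h) := subset_insert _ _
  have hreach_a : ∀ x ∈ S, EdgeConn (insert (a, b) (T.erase h)) x a := fun x hx => by
    rcases hreach x hx with hxa | hxb
    · exact hxa.mono hsub
    · exact (hxb.mono hsub).trans (edgeConn_of_mem (mem_insert_self _ _)).symm
  refine ⟨?_, ?_, fun x hx y hy => (hreach_a x hx).trans (hreach_a y hy).symm⟩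
  · intro e he
    rcases mem_insert.1 he with rfl | he
    · exact ⟨ha, hb⟩
    · exact hTS e (mem_of_mem_erase he)
  · rw [card_insert_of_notMem fun hmem => hab (edgeConn_of_mem hmem), card_erase_add_one hh,
      hcard]

end SpanningTree

section MinimumSpanningTree

variable {S H₁ H₂ : Finset α} {T : Finset (α × α)} {h : α × α} {a b : α}

theorem IsSpanningTreeOn.dist_le_of_not_edgeConn_erase (hT : IsSpanningTreeOn S T)
    (hTmin : ∀ E : Finset (α × α), IsSpanningTreeOn S E →
      (∑ e ∈ T, dist e.1 e.2) ≤ ∑ e ∈ E, dist e.1 e.2)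
    (hh : h ∈ T) (ha : a ∈ S) (hb : b ∈ S) (hab : ¬EdgeConn (T.erase h) a b)
    (hreach : ∀ x ∈ S, EdgeConn (T.erase h) x a ∨ EdgeConn (T.erase h) x b) :
    dist h.1 h.2 ≤ dist a b := by
  have hexchange := hTmin _ (hT.insert_erase hh ha hb hab hreach)
  rw [sum_insert fun hmem => hab (edgeConn_of_mem hmem)] at hexchange
  have hsplit := sum_erase_add T (fun e => dist e.1 e.2) hh
  linarith

theorem IsSpanningTreeOn.dist_le_of_mem_of_mem (hT : IsSpanningTreeOn S T)
    (hTmin : ∀ E : Finset (α × α), IsSpanningTreeOn S E →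
      (∑ e ∈ T, dist e.1 e.2) ≤ ∑ e ∈ E, dist e.1 e.2)
    (hh : h ∈ T) (hpart : H₁ ∪ H₂ = S) (hdisj : Disjoint H₁ H₂)
    (hcomp : ∀ x ∈ S, ∀ y ∈ S,
      EdgeConn (T.erase h) x y ↔ ((x ∈ H₁ ∧ y ∈ H₁) ∨ (x ∈ H₂ ∧ y ∈ H₂)))
    (ha : a ∈ H₁) (hb : b ∈ H₂) :
    dist h.1 h.2 ≤ dist a b := by
  have haS : a ∈ S := hpart ▸ mem_union_left H₂ ha
  have hbS : b ∈ S := hpart ▸ mem_union_right H₁ hb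
  refine hT.dist_le_of_not_edgeConn_erase hTmin hh haS hbS ?_ fun x hx => ?_
  · intro hab
    rcases (hcomp a haS b hbS).1 hab with ⟨-, hb₁⟩ | ⟨ha₂, -⟩
    · exact disjoint_left.1 hdisj hb₁ hb
    · exact disjoint_left.1 hdisj ha ha₂
  · rcases mem_union.1 (hpart.symm ▸ hx) with hx₁ | hx₂
    · exact Or.inl ((hcomp x hx a haS).2 (Or.inl ⟨hx₁, ha⟩))
    · exact Or.inr ((hcomp x hx b hbS).2 (Or.inr ⟨hx₂, hb⟩))

end MinimumSpanningTree

section BottleneckCost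

variable {X : Finset α} {c : ℝ}

theorem le_btCost_of_forall_exists_le (hX : X.Nonempty)
    (hE : ∀ E, IsSpanningTreeOn X E → ∃ e ∈ E, c ≤ dist e.1 e.2) : c ≤ btCost X := by
  obtain ⟨x, hx⟩ := hX
  refine le_csInf ⟨_, sum_nonneg fun e _ => dist_nonneg, _, isSpanningTreeOn_star hx,
    fun e he => single_le_sum (fun e _ => dist_nonneg) he⟩ ?_
  rintro d ⟨-, E, hEX, hEd⟩
  obtain ⟨e, he, hce⟩ := hE E hEX
  exact hce.trans (hEd e he)

theorem le_btCost_of_separated {P : Set α} {x y : α} (hx : x ∈ X) (hxP : x ∈ P)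
    (hy : y ∈ X) (hyP : y ∉ P) (hsep : ∀ a ∈ X, a ∈ P → ∀ b ∈ X, b ∉ P → c ≤ dist a b) :
    c ≤ btCost X := by
  refine le_btCost_of_forall_exists_le ⟨x, hx⟩ fun E hE => ?_
  obtain ⟨u, v, huv | hvu, hu, hv⟩ := (hE.2.2 x hx y hy).exists_edge_mem_not_mem P hxP hyP
  · exact ⟨(u, v), huv, hsep u (hE.1 _ huv).1 hu v (hE.1 _ huv).2 hv⟩
  · exact ⟨(v, u), hvu, dist_comm u v ▸ hsep u (hE.1 _ hvu).2 hu v (hE.1 _ hvu).1 hv⟩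

end BottleneckCost

section Coloring

variable {n : ℕ} (pts : Fin n × Bool → α) {P : Set α} {c : ℝ} {i : Fin n}

theorem le_btCost_image_of_pair_subset (τ : Fin n → Bool) {j : Fin n} (hi : ∀ b, pts (i, b) ∈ P)
    (hj : pts (j, τ j) ∉ P) (hsep : ∀ a ∈ P, ∀ k, pts k ∉ P → c ≤ dist a (pts k)) :
    c ≤ btCost (univ.image fun j => pts (j, τ j)) := by
  refine le_btCost_of_separated (mem_image_of_mem _ (mem_univ i)) (hi _)
    (mem_image_of_mem _ (mem_univ j)) hj ?_
  rintro a - ha b hb hbP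
  obtain ⟨k, -, rfl⟩ := mem_image.1 hb
  exact hsep a ha _ hbP

theorem le_max_btCost_of_pair_subset (σ : Fin n → Bool) (hi : ∀ b, pts (i, b) ∈ P)
    (hout : ∃ k, pts k ∉ P) (hsep : ∀ a ∈ P, ∀ k, pts k ∉ P → c ≤ dist a (pts k)) :
    c ≤ max (btCost (univ.image fun j => pts (j, σ j)))
      (btCost (univ.image fun j => pts (j, !σ j))) := by
  obtain ⟨⟨j, b⟩, hk⟩ := hout
  rcases Bool.eq_or_eq_not b (σ j) with rfl | rfl
  · exact le_max_of_le_left (le_btCost_image_of_pair_subset pts σ hi hk hsep)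
  · exact le_max_of_le_right (le_btCost_image_of_pair_subset pts (fun j => !σ j) hi hk hsep)

end Coloring

theorem bottleneck_lower_bound_heaviest_edge_general
    (n : ℕ)
    (pts : Fin n × Bool → α)
    (S : Finset α) (hS : S = Finset.image pts Finset.univ)
    (T : Finset (α × α)) (hT : IsSpanningTreeOn S T)
    (hTmin : ∀ E : Finset (α × α), IsSpanningTreeOn S E →
      (∑ e ∈ T, dist e.1 e.2) ≤ ∑ e ∈ E, dist e.1 e.2)
    (h : α × α) (hh : h ∈ T)
    (H₁ H₂ : Finset α) (hpart : H₁ ∪ H₂ = S) (hdisj : Disjoint H₁ H₂)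
    (hne1 : H₁.Nonempty) (hne2 : H₂.Nonempty)
    (hcomp : ∀ x ∈ S, ∀ y ∈ S,
      EdgeConn (T.erase h) x y ↔ ((x ∈ H₁ ∧ y ∈ H₁) ∨ (x ∈ H₂ ∧ y ∈ H₂)))
    (hpair : ∃ i : Fin n, (pts (i, false) ∈ H₁ ∧ pts (i, true) ∈ H₁) ∨
                          (pts (i, false) ∈ H₂ ∧ pts (i, true) ∈ H₂))
    (σ : Fin n → Bool)
    (R B : Finset α)
    (hR : R = Finset.image (fun i => pts (i, σ i)) Finset.univ)
    (hB : B = Finset.image (fun i => pts (i, !(σ i))) Finset.univ) :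
    dist h.1 h.2 ≤ max (btCost R) (btCost B) := by
  subst hS hR hB
  have hcut := fun a (ha : a ∈ H₁) b (hb : b ∈ H₂) =>
    hT.dist_le_of_mem_of_mem hTmin hh hpart hdisj hcomp ha hb
  have hside : ∀ k, pts k ∈ H₁ ∨ pts k ∈ H₂ := fun k =>
    mem_union.1 (hpart ▸ mem_image_of_mem pts (mem_univ k))
  obtain ⟨i, ⟨hf, ht⟩ | ⟨hf, ht⟩⟩ := hpair
  · obtain ⟨z, hz⟩ := hne2
    obtain ⟨k, -, rfl⟩ := mem_image.1 (hpart ▸ mem_union_right H₁ hz)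
    exact le_max_btCost_of_pair_subset pts σ (Bool.forall_bool.2 ⟨hf, ht⟩)
      ⟨k, disjoint_right.1 hdisj hz⟩ fun a ha k hk => hcut a ha _ ((hside k).resolve_left hk)
  · obtain ⟨z, hz⟩ := hne1
    obtain ⟨k, -, rfl⟩ := mem_image.1 (hpart ▸ mem_union_left H₂ hz)
    exact le_max_btCost_of_pair_subset pts σ (Bool.forall_bool.2 ⟨hf, ht⟩)
      ⟨k, disjoint_left.1 hdisj hz⟩ fun a ha k hk =>
        dist_comm a (pts k) ▸ hcut _ ((hside k).resolve_right hk) a ha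

/-- `S` consists of `n` pairs `{pts (i, false), pts (i, true)}`. Let `T` be
a minimum spanning tree of `S` (minimizing total edge length), `h` a maximum-weight edge
of `T`, and `H₁, H₂` the vertex sets of the two components of `T` after removing `h`.
If some pair has both of its points in `H₁` or both in `H₂`, then every feasible coloring
`S = R ∪ B` satisfies `max (btCost R) (btCost B) ≥ dist h.1 h.2`. -/
theorem bottleneck_lower_bound_heaviest_edge
    (n : ℕ) (hn : 1 ≤ n)
    (pts : Fin n × Bool → α) (hinj : Function.Injective pts)
    (S : Finset α) (hS : S = Finset.image pts Finset.univ)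
    (T : Finset (α × α)) (hT : IsSpanningTreeOn S T)
    (hTmin : ∀ E : Finset (α × α), IsSpanningTreeOn S E →
      (∑ e ∈ T, dist e.1 e.2) ≤ ∑ e ∈ E, dist e.1 e.2)
    (h : α × α) (hh : h ∈ T) (hmax : ∀ e ∈ T, dist e.1 e.2 ≤ dist h.1 h.2)
    (H₁ H₂ : Finset α) (hpart : H₁ ∪ H₂ = S) (hdisj : Disjoint H₁ H₂)
    (hne1 : H₁.Nonempty) (hne2 : H₂.Nonempty)
    (hcomp : ∀ x ∈ S, ∀ y ∈ S,
      EdgeConn (T.erase h) x y ↔ ((x ∈ H₁ ∧ y ∈ H₁) ∨ (x ∈ H₂ ∧ y ∈ H₂)))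
    (hpair : ∃ i : Fin n, (pts (i, false) ∈ H₁ ∧ pts (i, true) ∈ H₁) ∨
                          (pts (i, false) ∈ H₂ ∧ pts (i, true) ∈ H₂))
    (σ : Fin n → Bool)
    (R B : Finset α)
    (hR : R = Finset.image (fun i => pts (i, σ i)) Finset.univ)
    (hB : B = Finset.image (fun i => pts (i, !(σ i))) Finset.univ) :
    dist h.1 h.2 ≤ max (btCost R) (btCost B) :=
  bottleneck_lower_bound_heaviest_edge_general n pts S hS T hT hTmin h hh H₁ H₂ hpart hdisj hne1
    hne2 hcomp hpair σ R B hR hB
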